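/- Let x₁, x₂ : ℝ → ℝ be differentiable on [0,2] and u : ℝ → ℝ be continuous on [0,2], with x₁′(t) = x₂(t) and x₂′(t) = u(t) for all t ∈ [0,2], and x₁(0) = 1, x₂(0) = 1, x₁(2) = 0, x₂(2) = 0. Then ∫₀² u(t)² dt ≥ 6.5, i.e., the control energy of every admissible control is at least that of u*(t) = 3t − 3.5. -/

import Mathlib

/-!
Two integrations by parts turn the boundary conditions into the moments `∫₀² u = -1` and
`∫₀² t u(t) dt = 1`. Hence `∫₀² u u* = 3 · 1 - 7/2 · (-1) = 13/2 = ∫₀² (u*)²` for every admissible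
`u`, and expanding `0 ≤ ∫₀² (u - u*)²` gives `∫₀² u² ≥ 2 ∫₀² u u* - ∫₀² (u*)² = 13/2`.
-/

open Set intervalIntegral MeasureTheory
open scoped Interval

variable {a b : ℝ}

theorem integral_eq_sub_of_hasDerivWithinAt_uIcc {f f' : ℝ → ℝ}
    (hf : ∀ t ∈ [[a, b]], HasDerivWithinAt f (f' t) [[a, b]] t)
    (hf' : IntervalIntegrable f' volume a b) :
    ∫ t in a..b, f' t = f b - f a :=
  integral_eq_sub_of_hasDeriv_right (fun t ht ↦ (hf t ht).continuousWithinAt)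
    (fun t ht ↦ (hf t (mem_Icc_of_Ioo ht) |>.hasDerivAt (Icc_mem_nhds ht.1 ht.2)).hasDerivWithinAt)
    hf'

theorem integral_id_mul_eq_of_hasDerivWithinAt_uIcc {x₁ x₂ u : ℝ → ℝ}
    (hx₁ : ∀ t ∈ [[a, b]], HasDerivWithinAt x₁ (x₂ t) [[a, b]] t)
    (hx₂ : ∀ t ∈ [[a, b]], HasDerivWithinAt x₂ (u t) [[a, b]] t)
    (hu : IntervalIntegrable u volume a b) :
    ∫ t in a..b, t * u t = b * x₂ b - a * x₂ a - (x₁ b - x₁ a) := by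
  have hx₂_int : IntervalIntegrable x₂ volume a b :=
    ContinuousOn.intervalIntegrable fun t ht ↦ (hx₂ t ht).continuousWithinAt
  rw [integral_mul_deriv_eq_deriv_mul_of_hasDerivWithinAt (u := fun t ↦ t)
    (fun t _ ↦ hasDerivWithinAt_id t _) hx₂ intervalIntegrable_const hu]
  simp only [one_mul]
  rw [integral_eq_sub_of_hasDerivWithinAt_uIcc hx₁ hx₂_int]

theorem two_mul_integral_mul_sub_integral_sq_le {f g : ℝ → ℝ} (hab : a ≤ b)
    (hf : IntervalIntegrable (fun t ↦ f t ^ 2) volume a b)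
    (hfg : IntervalIntegrable (fun t ↦ f t * g t) volume a b)
    (hg : IntervalIntegrable (fun t ↦ g t ^ 2) volume a b) :
    2 * (∫ t in a..b, f t * g t) - ∫ t in a..b, g t ^ 2 ≤ ∫ t in a..b, f t ^ 2 := by
  have h_nonneg : 0 ≤ ∫ t in a..b, (f t - g t) ^ 2 :=
    integral_nonneg hab fun t _ ↦ sq_nonneg _
  have h_expand : ∫ t in a..b, (f t - g t) ^ 2 =
      (∫ t in a..b, f t ^ 2) - 2 * (∫ t in a..b, f t * g t) + ∫ t in a..b, g t ^ 2 := by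
    simp_rw [sub_sq, mul_assoc]
    rw [integral_add (hf.sub (hfg.const_mul 2)) hg, integral_sub hf (hfg.const_mul 2),
      intervalIntegral.integral_const_mul]
  linarith

/-- Every admissible control of the double-integrator problem on `[0,2]` with
boundary conditions `x(0) = (1,1)`, `x(2) = (0,0)` has energy
`∫₀² u(t)² dt ≥ 6.5`, the energy of `u*(t) = 3t − 3.5`. -/
theorem double_integrator_energy_lower_bound
    (x₁ x₂ u : ℝ → ℝ)
    (hx₁ : ∀ t ∈ Set.Icc (0 : ℝ) 2, HasDerivWithinAt x₁ (x₂ t) (Set.Icc (0 : ℝ) 2) t)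
    (hx₂ : ∀ t ∈ Set.Icc (0 : ℝ) 2, HasDerivWithinAt x₂ (u t) (Set.Icc (0 : ℝ) 2) t)
    (hu : ContinuousOn u (Set.Icc (0 : ℝ) 2))
    (h10 : x₁ 0 = 1) (h20 : x₂ 0 = 1) (h1f : x₁ 2 = 0) (h2f : x₂ 2 = 0) :
    (∫ t in (0 : ℝ)..2, (u t) ^ 2) ≥ 6.5 := by
  rw [← uIcc_of_le zero_le_two] at hx₁ hx₂ hu
  have hu_int : IntervalIntegrable u volume 0 2 := hu.intervalIntegrable
  have h_mean : ∫ t in (0 : ℝ)..2, u t = -1 := by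
    rw [integral_eq_sub_of_hasDerivWithinAt_uIcc hx₂ hu_int, h2f, h20]; norm_num
  have h_moment : ∫ t in (0 : ℝ)..2, t * u t = 1 := by
    rw [integral_id_mul_eq_of_hasDerivWithinAt_uIcc hx₁ hx₂ hu_int, h2f, h20, h1f, h10]; norm_num
  have h_cross : ∫ t in (0 : ℝ)..2, u t * (3 * t - 7 / 2) = 13 / 2 := by
    have h_tu : IntervalIntegrable (fun t ↦ t * u t) volume 0 2 :=
      (continuousOn_id.mul hu).intervalIntegrable
    simp_rw [mul_sub, mul_comm (u _) (3 * _), mul_assoc]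
    rw [integral_sub (h_tu.const_mul 3) (hu_int.mul_const _),
      intervalIntegral.integral_const_mul, intervalIntegral.integral_mul_const, h_moment, h_mean]
    norm_num
  have h_optimal : ∫ t in (0 : ℝ)..2, (3 * t - 7 / 2) ^ 2 = 13 / 2 := by
    rw [integral_comp_mul_sub (· ^ 2) three_ne_zero, integral_pow]; norm_num
  have h_energy := two_mul_integral_mul_sub_integral_sq_le (g := fun t ↦ 3 * t - 7 / 2) zero_le_two
    (hu.pow 2).intervalIntegrable (hu.mul (by fun_prop)).intervalIntegrable
    (Continuous.intervalIntegrable (by fun_prop) _ _)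
  norm_num only [h_cross, h_optimal] at h_energy ⊢
  linarith
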